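/- arXiv:2502.06732 — 2 statements merged into one kernel-verified Lean document; each statement's English description precedes it below -/
import Mathlib

section
/- Let G be the 6×6 Cartan matrix of E₆ in Bourbaki numbering (G_{ii} = 2; G_{ij} = −1 for the pairs {1,3}, {3,4}, {4,5}, {5,6}, {2,4}; G_{ij} = 0 otherwise). For a column vector β ∈ ℚ⁶ with βᵀGβ = 2, let R_β be the 6×6 matrix acting by v ↦ v − (βᵀGv)·β. Let e₁, …, e₆ be the standard basis vectors and set σ = R_{e₁} ∘ R_{e₂} ∘ R_{e₅} ∘ R_{e₆} ∘ R_{e₂+e₄} ∘ R_{e₃+e₄}. Let ζ = exp(2πi/36) and let Λ ∈ ℂ⁶ be the vector with coordinates (ζ, −ζ⁷+ζ⁵+ζ, −ζ⁹+ζ³+ζ, −ζ¹¹−ζ⁷+ζ⁵+ζ³+ζ, −ζ¹¹+ζ⁵+ζ³, −ζ¹¹+ζ⁵). Then σΛ = exp(2πi/9)·Λ. -/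
open Matrix Complex

/-- The Cartan matrix of `E₆` in Bourbaki numbering. -/
noncomputable def E6CartanMatrix : Matrix (Fin 6) (Fin 6) ℂ :=
  !![2, 0, -1, 0, 0, 0;
     0, 2, 0, -1, 0, 0;
     -1, 0, 2, -1, 0, 0;
     0, -1, -1, 2, -1, 0;
     0, 0, 0, -1, 2, -1;
     0, 0, 0, 0, -1, 2]

/-- The reflection `v ↦ v − (βᵀGv)·β` in a root `β` (normalized with `βᵀGβ = 2`),
in simple-root coordinates. -/
noncomputable def E6Reflect (β : Fin 6 → ℂ) (v : Fin 6 → ℂ) : Fin 6 → ℂ :=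
  v - (β ⬝ᵥ E6CartanMatrix.mulVec v) • β

/-- The standard basis vector `eᵢ` of `ℂ⁶`, i.e. the simple root `αᵢ` in
simple-root coordinates. -/
noncomputable def E6e (i : Fin 6) : Fin 6 → ℂ := Pi.single i 1

/-- The Weyl group element `σ = r_{α₁} r_{α₂} r_{α₅} r_{α₆} r_{α₂+α₄} r_{α₃+α₄}`
of the conjugacy class `E₆(a₁)`. -/
noncomputable def E6sigma : (Fin 6 → ℂ) → (Fin 6 → ℂ) :=
  E6Reflect (E6e 0) ∘ E6Reflect (E6e 1) ∘ E6Reflect (E6e 4) ∘ E6Reflect (E6e 5) ∘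
    E6Reflect (E6e 1 + E6e 3) ∘ E6Reflect (E6e 2 + E6e 3)

private lemma cw5 {α : Type*} (x : α) (u : Fin 5 → α) : vecCons x u 5 = u 4 := rfl
private lemma cw4 {α : Type*} {n : ℕ} (x : α) (u : Fin (n+4) → α) : vecCons x u 4 = u 3 := rfl
private lemma cw3 {α : Type*} {n : ℕ} (x : α) (u : Fin (n+3) → α) : vecCons x u 3 = u 2 := rfl
private lemma cw2 {α : Type*} {n : ℕ} (x : α) (u : Fin (n+2) → α) : vecCons x u 2 = u 1 := rfl
private lemma cw1 {α : Type*} {n : ℕ} (x : α) (u : Fin (n+1) → α) : vecCons x u 1 = u 0 := rfl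
private lemma cw0 {α : Type*} {n : ℕ} (x : α) (u : Fin n → α) : vecCons x u 0 = x := rfl

private lemma vec6_ext {a₀ a₁ a₂ a₃ a₄ a₅ b₀ b₁ b₂ b₃ b₄ b₅ : ℂ}
    (h0 : a₀ = b₀) (h1 : a₁ = b₁) (h2 : a₂ = b₂) (h3 : a₃ = b₃) (h4 : a₄ = b₄)
    (h5 : a₅ = b₅) : ![a₀, a₁, a₂, a₃, a₄, a₅] = ![b₀, b₁, b₂, b₃, b₄, b₅] := by
  subst h0 h1 h2 h3 h4 h5; rfl

set_option maxHeartbeats 1000000 in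
/-- The explicit vector `Λ₊` is an eigenvector of `σ` with eigenvalue `e^{2πi/9}`. -/
theorem stmt8 (ζ : ℂ) (hζ : ζ = Complex.exp (2 * Real.pi * Complex.I / 36))
    (Λ : Fin 6 → ℂ)
    (hΛ : Λ = ![ζ, -ζ^7 + ζ^5 + ζ, -ζ^9 + ζ^3 + ζ, -ζ^11 - ζ^7 + ζ^5 + ζ^3 + ζ,
      -ζ^11 + ζ^5 + ζ^3, -ζ^11 + ζ^5]) :
    E6sigma Λ = Complex.exp (2 * Real.pi * Complex.I / 9) • Λ := by
  have h6 : ζ ^ 6 = 1 / 2 + (Real.sqrt 3 : ℂ) / 2 * Complex.I := by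
    rw [hζ, ← Complex.exp_nat_mul]
    have h : (6 : ℕ) * (2 * (Real.pi : ℂ) * Complex.I / 36) = (Real.pi / 3 : ℝ) * Complex.I := by
      push_cast; ring
    rw [h, Complex.exp_mul_I, ← Complex.ofReal_cos, ← Complex.ofReal_sin,
      Real.cos_pi_div_three, Real.sin_pi_div_three]
    push_cast; ring
  have h3 : (Real.sqrt 3 : ℂ) ^ 2 = 3 := by
    norm_cast
    exact Real.sq_sqrt (by norm_num)
  have hz : ζ ^ 12 - ζ ^ 6 + 1 = 0 := by
    have h12 : ζ ^ 12 = (ζ ^ 6) ^ 2 := by ring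
    rw [h12, h6]
    linear_combination (Complex.I ^ 2 / 4) * h3 + (3 / 4 : ℂ) * Complex.I_sq
  have he : Complex.exp (2 * Real.pi * Complex.I / 9) = ζ ^ 4 := by
    rw [hζ, ← Complex.exp_nat_mul]
    congr 1
    push_cast; ring
  subst hΛ
  have step0 : E6Reflect (E6e 2 + E6e 3) ![ζ, -ζ ^ 7 + ζ ^ 5 + ζ, -ζ ^ 9 + ζ ^ 3 + ζ, -ζ ^ 11 - ζ ^ 7 + ζ ^ 5 + ζ ^ 3 + ζ, -ζ ^ 11 + ζ ^ 5 + ζ ^ 3, -ζ ^ 11 + ζ ^ 5] = ![ζ, -ζ ^ 7 + ζ ^ 5 + ζ, ζ ^ 5 + ζ, -ζ ^ 11 + ζ ^ 9 - ζ ^ 7 + 2 * ζ ^ 5 + ζ, -ζ ^ 11 + ζ ^ 5 + ζ ^ 3, -ζ ^ 11 + ζ ^ 5] := by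
    funext i
    fin_cases i <;>
      simp [E6Reflect, E6e, E6CartanMatrix, Matrix.mulVec, dotProduct, Fin.sum_univ_six,
        Pi.single_apply, Matrix.vecHead, Matrix.vecTail, cw0, cw1, cw2, cw3, cw4, cw5] <;>
      ring
  have step1 : E6Reflect (E6e 1 + E6e 3) ![ζ, -ζ ^ 7 + ζ ^ 5 + ζ, ζ ^ 5 + ζ, -ζ ^ 11 + ζ ^ 9 - ζ ^ 7 + 2 * ζ ^ 5 + ζ, -ζ ^ 11 + ζ ^ 5 + ζ ^ 3, -ζ ^ 11 + ζ ^ 5] = ![ζ, -ζ ^ 9 + ζ ^ 7 + ζ ^ 3, ζ ^ 5 + ζ, -ζ ^ 11 + ζ ^ 7 + ζ ^ 5 + ζ ^ 3, -ζ ^ 11 + ζ ^ 5 + ζ ^ 3, -ζ ^ 11 + ζ ^ 5] := by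
    funext i
    fin_cases i <;>
      simp [E6Reflect, E6e, E6CartanMatrix, Matrix.mulVec, dotProduct, Fin.sum_univ_six,
        Pi.single_apply, Matrix.vecHead, Matrix.vecTail, cw0, cw1, cw2, cw3, cw4, cw5] <;>
      ring
  have step2 : E6Reflect (E6e 5) ![ζ, -ζ ^ 9 + ζ ^ 7 + ζ ^ 3, ζ ^ 5 + ζ, -ζ ^ 11 + ζ ^ 7 + ζ ^ 5 + ζ ^ 3, -ζ ^ 11 + ζ ^ 5 + ζ ^ 3, -ζ ^ 11 + ζ ^ 5] = ![ζ, -ζ ^ 9 + ζ ^ 7 + ζ ^ 3, ζ ^ 5 + ζ, -ζ ^ 11 + ζ ^ 7 + ζ ^ 5 + ζ ^ 3, -ζ ^ 11 + ζ ^ 5 + ζ ^ 3, ζ ^ 3] := by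
    funext i
    fin_cases i <;>
      simp [E6Reflect, E6e, E6CartanMatrix, Matrix.mulVec, dotProduct, Fin.sum_univ_six,
        Pi.single_apply, Matrix.vecHead, Matrix.vecTail, cw0, cw1, cw2, cw3, cw4, cw5] <;>
      ring
  have step3 : E6Reflect (E6e 4) ![ζ, -ζ ^ 9 + ζ ^ 7 + ζ ^ 3, ζ ^ 5 + ζ, -ζ ^ 11 + ζ ^ 7 + ζ ^ 5 + ζ ^ 3, -ζ ^ 11 + ζ ^ 5 + ζ ^ 3, ζ ^ 3] = ![ζ, -ζ ^ 9 + ζ ^ 7 + ζ ^ 3, ζ ^ 5 + ζ, -ζ ^ 11 + ζ ^ 7 + ζ ^ 5 + ζ ^ 3, ζ ^ 7 + ζ ^ 3, ζ ^ 3] := by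
    funext i
    fin_cases i <;>
      simp [E6Reflect, E6e, E6CartanMatrix, Matrix.mulVec, dotProduct, Fin.sum_univ_six,
        Pi.single_apply, Matrix.vecHead, Matrix.vecTail, cw0, cw1, cw2, cw3, cw4, cw5] <;>
      ring
  have step4 : E6Reflect (E6e 1) ![ζ, -ζ ^ 9 + ζ ^ 7 + ζ ^ 3, ζ ^ 5 + ζ, -ζ ^ 11 + ζ ^ 7 + ζ ^ 5 + ζ ^ 3, ζ ^ 7 + ζ ^ 3, ζ ^ 3] = ![ζ, -ζ ^ 11 + ζ ^ 9 + ζ ^ 5, ζ ^ 5 + ζ, -ζ ^ 11 + ζ ^ 7 + ζ ^ 5 + ζ ^ 3, ζ ^ 7 + ζ ^ 3, ζ ^ 3] := by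
    funext i
    fin_cases i <;>
      simp [E6Reflect, E6e, E6CartanMatrix, Matrix.mulVec, dotProduct, Fin.sum_univ_six,
        Pi.single_apply, Matrix.vecHead, Matrix.vecTail, cw0, cw1, cw2, cw3, cw4, cw5] <;>
      ring
  have step5 : E6Reflect (E6e 0) ![ζ, -ζ ^ 11 + ζ ^ 9 + ζ ^ 5, ζ ^ 5 + ζ, -ζ ^ 11 + ζ ^ 7 + ζ ^ 5 + ζ ^ 3, ζ ^ 7 + ζ ^ 3, ζ ^ 3] = ![ζ ^ 5, -ζ ^ 11 + ζ ^ 9 + ζ ^ 5, ζ ^ 5 + ζ, -ζ ^ 11 + ζ ^ 7 + ζ ^ 5 + ζ ^ 3, ζ ^ 7 + ζ ^ 3, ζ ^ 3] := by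
    funext i
    fin_cases i <;>
      simp [E6Reflect, E6e, E6CartanMatrix, Matrix.mulVec, dotProduct, Fin.sum_univ_six,
        Pi.single_apply, Matrix.vecHead, Matrix.vecTail, cw0, cw1, cw2, cw3, cw4, cw5] <;>
      ring
  show (E6Reflect (E6e 0) (E6Reflect (E6e 1) (E6Reflect (E6e 4) (E6Reflect (E6e 5)
    (E6Reflect (E6e 1 + E6e 3) (E6Reflect (E6e 2 + E6e 3) _)))))) = _
  rw [step0, step1, step2, step3, step4, step5, he]
  have hs : (ζ ^ 4 : ℂ) • ![ζ, -ζ^7 + ζ^5 + ζ, -ζ^9 + ζ^3 + ζ, -ζ^11 - ζ^7 + ζ^5 + ζ^3 + ζ,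
      -ζ^11 + ζ^5 + ζ^3, -ζ^11 + ζ^5] =
      ![ζ^4 * ζ, ζ^4 * (-ζ^7 + ζ^5 + ζ), ζ^4 * (-ζ^9 + ζ^3 + ζ),
        ζ^4 * (-ζ^11 - ζ^7 + ζ^5 + ζ^3 + ζ), ζ^4 * (-ζ^11 + ζ^5 + ζ^3), ζ^4 * (-ζ^11 + ζ^5)] := by
    funext i
    fin_cases i <;> rfl
  rw [hs]
  exact vec6_ext (by ring) (by ring) (by linear_combination ζ * hz)
    (by linear_combination ζ ^ 3 * hz) (by linear_combination ζ ^ 3 * hz)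
    (by linear_combination ζ ^ 3 * hz)
end

section
/- Let ζ = exp(2πi/36). Then |ζ¹¹ − ζ⁷ + ζ⁵ − ζ³ + ζ| = |ζ¹¹ − 2ζ⁹ + ζ⁷ − ζ⁵ + ζ³|. -/
/-!
`ζ` is a primitive 36th root of unity, so `ζ⁶` is a primitive 6th root and `ζ` satisfies the
cyclotomic relation `ζ¹² − ζ⁶ + 1 = 0`. Modulo this relation the first polynomial equals `ζ¹⁴`
times the second, and `|ζ| = 1`.
-/

theorem IsPrimitiveRoot.sq_sub_self_add_one_eq_zero {R : Type*} [CommRing R] [NoZeroDivisors R]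
    {ω : R} (h : IsPrimitiveRoot ω 6) : ω ^ 2 - ω + 1 = 0 := by
  have hcube : ω ^ 3 = -1 := (h.pow_of_dvd (by norm_num) (by norm_num)).eq_neg_one_of_two_right
  have hne : ω + 1 ≠ 0 := by
    intro hω
    have hsq : ω ^ 2 = 1 := by rw [eq_neg_of_add_eq_zero_left hω]; ring
    exact h.pow_ne_one_of_pos_of_lt (by norm_num) (by norm_num) hsq
  have hprod : (ω + 1) * (ω ^ 2 - ω + 1) = 0 := by linear_combination hcube
  exact (mul_eq_zero.mp hprod).resolve_left hne

theorem IsPrimitiveRoot.pow_twelve_sub_pow_six_add_one_eq_zero {R : Type*} [CommRing R]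
    [NoZeroDivisors R] {ζ : R} (h : IsPrimitiveRoot ζ 36) : ζ ^ 12 - ζ ^ 6 + 1 = 0 := by
  have h6 : IsPrimitiveRoot (ζ ^ 6) 6 := h.pow_of_dvd (by norm_num) (by norm_num)
  linear_combination h6.sq_sub_self_add_one_eq_zero

/-- For `ζ = e^{2πi/36}`: `|ζ¹¹ − ζ⁷ + ζ⁵ − ζ³ + ζ| = |ζ¹¹ − 2ζ⁹ + ζ⁷ − ζ⁵ + ζ³|`. -/
theorem stmt10 (ζ : ℂ) (hζ : ζ = Complex.exp (2 * Real.pi * Complex.I / 36)) :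
    ‖ζ^11 - ζ^7 + ζ^5 - ζ^3 + ζ‖ =
      ‖ζ^11 - 2*ζ^9 + ζ^7 - ζ^5 + ζ^3‖ := by
  have hprim : IsPrimitiveRoot ζ 36 := by
    simpa [hζ] using Complex.isPrimitiveRoot_exp 36 (by norm_num)
  have hcyc := hprim.pow_twelve_sub_pow_six_add_one_eq_zero
  have hrel : ζ^11 - ζ^7 + ζ^5 - ζ^3 + ζ = (ζ^11 - 2*ζ^9 + ζ^7 - ζ^5 + ζ^3) * ζ ^ 14 := by
    linear_combination (-ζ^13 + 2*ζ^11 - ζ^9 + ζ^5 - ζ^3 + ζ) * hcyc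
  rw [hrel, norm_mul, norm_pow, hprim.norm'_eq_one (by norm_num), one_pow, mul_one]
end
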